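/- Operational meaning of the decay parameters: let G be a finite group, U : G → U(d) a group homomorphism, and p, t ∈ ℂ. Let R be an invertible superoperator, (L_g)_{g∈G} a family of superoperators, and define T(g) = L_g ∘ Ad(U g) ∘ R. If E_{g∈G}[Ad(U g)⁻¹ ∘ R ∘ T(g)] = D_{p,t} ∘ R, then E_{g∈G}[Ad(U g)⁻¹ ∘ (R ∘ L_g) ∘ Ad(U g)] = D_{p,t}; consequently t = (1/d)·E_{g∈G}[tr((R ∘ L_g)(I_d))] and t + p·(d² − 1) = E_{g∈G}[Tr(R ∘ L_g)], where Tr denotes the trace of a superoperator as a ℂ-linear endomorphism of M_d(ℂ). -/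

import Mathlib

noncomputable section

namespace RBPaper

abbrev Mat (d : ℕ) := Matrix (Fin d) (Fin d) ℂ

abbrev SuperOp (d : ℕ) := Module.End ℂ (Mat d)

/-- The superoperator `X ↦ U X Uᴴ` for a unitary `U`. -/
def Ad {d : ℕ} (U : Matrix.unitaryGroup (Fin d) ℂ) : SuperOp d :=
  LinearMap.mulLeft ℂ (U : Mat d) ∘ₗ LinearMap.mulRight ℂ (star (U : Mat d))

/-- The superoperator `X ↦ tr(X) • I`. -/
def traceMap (d : ℕ) : SuperOp d :=
  (Matrix.traceLinearMap (Fin d) ℂ ℂ).smulRight (1 : Mat d)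

/-- The depolarizing-type map `D_{p,t} : X ↦ (t/d)·tr(X)·I + p·(X − (tr(X)/d)·I)`. -/
def Dpt (d : ℕ) (p t : ℂ) : SuperOp d :=
  (t / d) • traceMap d + p • (LinearMap.id - (d : ℂ)⁻¹ • traceMap d)

/-- The projection `Π₀ : X ↦ X − (tr(X)/d)·I` onto traceless matrices. -/
def Pi0 (d : ℕ) : SuperOp d := LinearMap.id - (d : ℂ)⁻¹ • traceMap d

/-- Uniform average of a finitely-indexed family in a `ℂ`-module. -/
def expG {G : Type*} [Fintype G] {M : Type*} [AddCommMonoid M] [Module ℂ M]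
    (f : G → M) : M := (Fintype.card G : ℂ)⁻¹ • ∑ g, f g

/-- `(G, U)` is a unitary 2-design: the conjugation action has no nontrivial
invariant subspace of the traceless matrices. -/
def IsTwoDesign {d : ℕ} {G : Type*} [Group G] [Fintype G]
    (U : G →* Matrix.unitaryGroup (Fin d) ℂ) : Prop :=
  ∀ W : Submodule ℂ (Mat d),
    W ≤ LinearMap.ker (Matrix.traceLinearMap (Fin d) ℂ ℂ) →
    (∀ (g : G), ∀ X ∈ W, Ad (U g) X ∈ W) →
    W = ⊥ ∨ W = LinearMap.ker (Matrix.traceLinearMap (Fin d) ℂ ℂ)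


lemma Ad_apply {d : ℕ} (U : Matrix.unitaryGroup (Fin d) ℂ) (X : Mat d) :
    Ad U X = (U : Mat d) * X * star (U : Mat d) := by
  simp [Ad, LinearMap.mulLeft, LinearMap.mulRight, mul_assoc]

lemma Ad_inv_comp_Ad {d : ℕ} (U : Matrix.unitaryGroup (Fin d) ℂ) :
    Ad U⁻¹ ∘ₗ Ad U = LinearMap.id := by
  apply LinearMap.ext; intro X
  simp only [LinearMap.comp_apply, Ad_apply, Matrix.UnitaryGroup.inv_val, star_star,
    LinearMap.id_apply]
  calc star (U : Mat d) * ((U : Mat d) * X * star (U : Mat d)) * (U : Mat d)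
      = (star (U : Mat d) * (U : Mat d)) * X * (star (U : Mat d) * (U : Mat d)) := by
        noncomm_ring
    _ = X := by rw [Matrix.UnitaryGroup.star_mul_self]; simp

lemma trace_traceMap (d : ℕ) : LinearMap.trace ℂ (Mat d) (traceMap d) = d := by
  have : traceMap d =
      dualTensorHom ℂ (Mat d) (Mat d) ((Matrix.traceLinearMap (Fin d) ℂ ℂ) ⊗ₜ (1 : Mat d)) := by
    rfl
  rw [this, LinearMap.trace_eq_contract_apply]
  simp [Matrix.trace_one]

/-- Operational meaning of the decay parameters: if
`T(g) = L_g ∘ Ad(U g) ∘ R` with `R` invertible and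
`E_g[Ad(U g)⁻¹ ∘ R ∘ T(g)] = D_{p,t} ∘ R`, then the twirl of the averaged
inter-gate noise `R ∘ L_g` is `D_{p,t}`, so `t` and `p` give its average trace
loss and (shifted) fidelity. -/
theorem decay_parameter_meaning {d : ℕ} (hd : 0 < d) {G : Type*} [Group G] [Fintype G]
    (U : G →* Matrix.unitaryGroup (Fin d) ℂ) (p t : ℂ)
    (R : SuperOp d) (hRinv : Function.Bijective R)
    (Lg : G → SuperOp d) (T : G → SuperOp d)
    (hT : ∀ g : G, T g = Lg g ∘ₗ Ad (U g) ∘ₗ R)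
    (hR : expG (fun g : G => Ad ((U g)⁻¹) ∘ₗ R ∘ₗ T g) = Dpt d p t ∘ₗ R) :
    expG (fun g : G => Ad ((U g)⁻¹) ∘ₗ (R ∘ₗ Lg g) ∘ₗ Ad (U g)) = Dpt d p t ∧
      t = (d : ℂ)⁻¹ * expG (fun g : G => ((R ∘ₗ Lg g) 1).trace) ∧
      t + p * ((d : ℂ) ^ 2 - 1) =
        expG (fun g : G => LinearMap.trace ℂ (Mat d) (R ∘ₗ Lg g)) := by
  have hdc : (d : ℂ) ≠ 0 := Nat.cast_ne_zero.mpr hd.ne'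
  set A : G → SuperOp d := fun g => Ad ((U g)⁻¹) ∘ₗ (R ∘ₗ Lg g) ∘ₗ Ad (U g) with hAdef
  -- Part 1
  have hA : expG A = Dpt d p t := by
    have h1 : (fun g : G => Ad ((U g)⁻¹) ∘ₗ R ∘ₗ T g) = fun g => A g ∘ₗ R := by
      funext g; rw [hT g]; rfl
    rw [h1] at hR
    have h2 : expG (fun g => A g ∘ₗ R) = (expG A) ∘ₗ R := by
      simp only [expG, ← Module.End.mul_eq_comp, Finset.sum_mul, smul_mul_assoc]
    rw [h2] at hR
    refine LinearMap.ext fun X => ?_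
    obtain ⟨Y, rfl⟩ := hRinv.2 X
    exact LinearMap.congr_fun hR Y
  refine ⟨hA, ?_, ?_⟩
  · -- Part 2: trace of the image of 1
    have e1 : ((Dpt d p t) (1 : Mat d)).trace = t * d := by
      simp only [Dpt, traceMap, LinearMap.add_apply, LinearMap.smul_apply, LinearMap.sub_apply,
        LinearMap.smulRight_apply, Matrix.traceLinearMap_apply, Matrix.trace_one,
        LinearMap.id_apply]
      simp only [Matrix.trace_add, Matrix.trace_smul, Matrix.trace_sub, Matrix.trace_one,
        smul_eq_mul]
      field_simp
      simp only [Fintype.card_fin]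
      ring
    have e2 : ∀ g : G, (A g (1 : Mat d)).trace = ((R ∘ₗ Lg g) 1).trace := by
      intro g
      have hone : Ad (U g) (1 : Mat d) = 1 := by
        rw [Ad_apply, mul_one]
        exact Unitary.coe_mul_star_self (U g)
      simp only [hAdef, LinearMap.comp_apply, hone]
      rw [Ad_apply]
      simp only [Matrix.UnitaryGroup.inv_val, star_star]
      rw [Matrix.trace_mul_cycle, (show ((U g : Mat d) * star (U g : Mat d)) = 1 from (U g).2.2),
        one_mul]
    have e3 : ((expG A) (1 : Mat d)).trace = expG (fun g => ((R ∘ₗ Lg g) 1).trace) := by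
      simp only [expG, LinearMap.smul_apply, LinearMap.sum_apply, Matrix.trace_smul,
        Matrix.trace_sum]
      congr 1
      exact Finset.sum_congr rfl fun g _ => e2 g
    rw [hA, e1] at e3
    rw [← e3]
    field_simp
  · -- Part 3: superoperator trace
    have f1 : LinearMap.trace ℂ (Mat d) (Dpt d p t) = t + p * ((d : ℂ) ^ 2 - 1) := by
      simp only [Dpt, map_add, map_smul, map_sub, trace_traceMap, LinearMap.trace_id,
        smul_eq_mul]
      have : (Module.finrank ℂ (Mat d) : ℂ) = (d : ℂ) ^ 2 := by
        simp [Module.finrank_matrix]; ring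
      rw [this]
      field_simp
    have f2 : ∀ g : G, LinearMap.trace ℂ (Mat d) (A g)
        = LinearMap.trace ℂ (Mat d) (R ∘ₗ Lg g) := by
      intro g
      have : Ad (U g) ∘ₗ Ad ((U g)⁻¹) = LinearMap.id := by
        have := Ad_inv_comp_Ad ((U g)⁻¹)
        rwa [inv_inv] at this
      calc LinearMap.trace ℂ (Mat d) (Ad ((U g)⁻¹) ∘ₗ (R ∘ₗ Lg g) ∘ₗ Ad (U g))
          = LinearMap.trace ℂ (Mat d) (((R ∘ₗ Lg g) ∘ₗ Ad (U g)) ∘ₗ Ad ((U g)⁻¹)) :=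
            LinearMap.trace_comp_comm' _ _
        _ = LinearMap.trace ℂ (Mat d) ((R ∘ₗ Lg g) ∘ₗ (Ad (U g) ∘ₗ Ad ((U g)⁻¹))) := by
            rw [LinearMap.comp_assoc]
        _ = LinearMap.trace ℂ (Mat d) (R ∘ₗ Lg g) := by rw [this, LinearMap.comp_id]
    have f3 : LinearMap.trace ℂ (Mat d) (expG A)
        = expG (fun g => LinearMap.trace ℂ (Mat d) (R ∘ₗ Lg g)) := by
      simp only [expG, map_smul, map_sum, smul_eq_mul]
      congr 1
      exact Finset.sum_congr rfl fun g _ => f2 g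
    rw [hA, f1] at f3
    exact f3



end RBPaper
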